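/- Let ω, ω̂ ≥ 0, M, M̂ > 0, η, η̂ ∈ (0,1], and let u : S₂ → ℝ be any function. A pair (ρ, ρ̂) ∈ S₂ × S₂ is an equilibrium of the coupled system, i.e., G_{η,M}(ρ) = 0, G_{η̂,M̂}(ρ̂) = 0, L^{u(ρ̂)}_{ω,M}(ρ) = 0, and L^{u(ρ̂)}_{ω̂,M̂}(ρ̂) + G_{η̂,M̂}(ρ̂)(√(ηM)Tr(σzρ) − √(η̂M̂)Tr(σzρ̂)) = 0, if and only if ρ ∈ {ρ_g, ρ_e}, ρ̂ ∈ {ρ_g, ρ_e} and u(ρ̂) = 0, where ρ_g := diag(1,0) and ρ_e := diag(0,1). -/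
import Mathlib


open Matrix Complex
open scoped ComplexOrder

/-- Pauli matrix σy. -/
noncomputable def sy : Matrix (Fin 2) (Fin 2) ℂ := !![0, -Complex.I; Complex.I, 0]
/-- Pauli matrix σz. -/
noncomputable def sz : Matrix (Fin 2) (Fin 2) ℂ := !![1, 0; 0, -1]

/-- The set of 2×2 density matrices. -/
def S2 : Set (Matrix (Fin 2) (Fin 2) ℂ) :=
  {ρ | ρᴴ = ρ ∧ ρ.trace = 1 ∧ ρ.PosSemidef}

/-- The drift operator L^u_{ω,M}(ρ) = −(i/2)[ωσz + uσy, ρ] + (M/4)(σzρσz − ρ). -/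
noncomputable def Lop (ω u M : ℝ) (ρ : Matrix (Fin 2) (Fin 2) ℂ) : Matrix (Fin 2) (Fin 2) ℂ :=
  (-(Complex.I) / 2) • (((ω : ℂ) • sz + (u : ℂ) • sy) * ρ - ρ * ((ω : ℂ) • sz + (u : ℂ) • sy))
    + ((M : ℂ) / 4) • (sz * ρ * sz - ρ)

/-- The diffusion operator G_{η,M}(ρ) = (√(ηM)/2)(σzρ + ρσz − 2Tr(σzρ)ρ). -/
noncomputable def Gop (η M : ℝ) (ρ : Matrix (Fin 2) (Fin 2) ℂ) : Matrix (Fin 2) (Fin 2) ℂ :=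
  ((Real.sqrt (η * M) : ℂ) / 2) • (sz * ρ + ρ * sz - (2 * (sz * ρ).trace) • ρ)

/-- The ground state ρ_g = diag(1,0). -/
noncomputable def rhoG : Matrix (Fin 2) (Fin 2) ℂ := !![1, 0; 0, 0]
/-- The excited state ρ_e = diag(0,1). -/
noncomputable def rhoE : Matrix (Fin 2) (Fin 2) ℂ := !![0, 0; 0, 1]

lemma gop_g (η M : ℝ) : Gop η M rhoG = 0 := by
  ext i j
  fin_cases i <;> fin_cases j <;>
    simp [Gop, sz, rhoG, Matrix.mul_fin_two, Matrix.trace_fin_two_of, Matrix.smul_of] <;>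
    norm_num

lemma gop_e (η M : ℝ) : Gop η M rhoE = 0 := by
  ext i j
  fin_cases i <;> fin_cases j <;>
    simp [Gop, sz, rhoE, Matrix.mul_fin_two, Matrix.trace_fin_two_of, Matrix.smul_of] <;>
    norm_num

lemma gop_zero_iff (η M : ℝ) (h : 0 < η * M) (ρ : Matrix (Fin 2) (Fin 2) ℂ)
    (htr : ρ.trace = 1) : Gop η M ρ = 0 ↔ ρ = rhoG ∨ ρ = rhoE := by
  have hs : ((Real.sqrt (η * M) : ℂ)) ≠ 0 :=
    Complex.ofReal_ne_zero.mpr (ne_of_gt (Real.sqrt_pos.mpr h))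
  constructor
  · intro hG
    rw [Matrix.eta_fin_two ρ] at htr hG ⊢
    rw [Matrix.trace_fin_two_of] at htr
    rw [Gop, smul_eq_zero] at hG
    rcases hG with h0 | hG
    · exact absurd h0 (by simpa using hs)
    simp only [sz, Matrix.mul_fin_two, Matrix.trace_fin_two_of, Matrix.smul_of] at hG
    rw [← Matrix.ext_iff, Fin.forall_fin_two] at hG
    simp only [Fin.forall_fin_two] at hG
    simp at hG
    obtain ⟨⟨e00, e01⟩, e10, _⟩ := hG
    have ha : ρ 0 0 * (ρ 0 0 - 1) = 0 := by
      linear_combination (-(1:ℂ)/4) * e00 + (ρ 0 0 / 2) * htr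
    rcases mul_eq_zero.mp ha with ha0 | ha1
    · right
      have hd : ρ 1 1 = 1 := by linear_combination htr - ha0
      rcases e01 with hx | hb
      · rw [ha0, hd] at hx; norm_num at hx
      rcases e10 with hx | hc
      · rw [ha0, hd] at hx; norm_num at hx
      rw [ha0, hd, hb, hc]; rfl
    · left
      have ha : ρ 0 0 = 1 := by linear_combination ha1
      have hd : ρ 1 1 = 0 := by linear_combination htr - ha1
      rcases e01 with hx | hb
      · rw [ha, hd] at hx; norm_num at hx
      rcases e10 with hx | hc
      · rw [ha, hd] at hx; norm_num at hx
      rw [ha, hd, hb, hc]; rfl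
  · rintro (rfl | rfl)
    · exact gop_g η M
    · exact gop_e η M

lemma lop_g_iff (ω u M : ℝ) : Lop ω u M rhoG = 0 ↔ u = 0 := by
  constructor
  · intro hL
    rw [← Matrix.ext_iff, Fin.forall_fin_two] at hL
    simp only [Fin.forall_fin_two] at hL
    simpa [Lop, sy, sz, rhoG, Matrix.mul_apply, Fin.sum_univ_two] using hL
  · rintro rfl
    ext i j
    fin_cases i <;> fin_cases j <;>
      simp [Lop, sy, sz, rhoG, Matrix.mul_apply, Fin.sum_univ_two]

lemma lop_e_iff (ω u M : ℝ) : Lop ω u M rhoE = 0 ↔ u = 0 := by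
  constructor
  · intro hL
    rw [← Matrix.ext_iff, Fin.forall_fin_two] at hL
    simp only [Fin.forall_fin_two] at hL
    simpa [Lop, sy, sz, rhoE, Matrix.mul_apply, Fin.sum_univ_two] using hL
  · rintro rfl
    ext i j
    fin_cases i <;> fin_cases j <;>
      simp [Lop, sy, sz, rhoE, Matrix.mul_apply, Fin.sum_univ_two]

theorem equilibrium_characterization (ω ω' M M' η η' : ℝ)
    (hω : 0 ≤ ω) (hω' : 0 ≤ ω') (hM : 0 < M) (hM' : 0 < M')
    (hη : η ∈ Set.Ioc (0 : ℝ) 1) (hη' : η' ∈ Set.Ioc (0 : ℝ) 1)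
    (u : Matrix (Fin 2) (Fin 2) ℂ → ℝ)
    (ρ ρ' : Matrix (Fin 2) (Fin 2) ℂ) (hρ : ρ ∈ S2) (hρ' : ρ' ∈ S2) :
    (Gop η M ρ = 0 ∧ Gop η' M' ρ' = 0 ∧ Lop ω (u ρ') M ρ = 0 ∧
      Lop ω' (u ρ') M' ρ' +
        (((Real.sqrt (η * M) : ℂ)) * (sz * ρ).trace
          - ((Real.sqrt (η' * M') : ℂ)) * (sz * ρ').trace) • Gop η' M' ρ' = 0)
    ↔ ((ρ = rhoG ∨ ρ = rhoE) ∧ (ρ' = rhoG ∨ ρ' = rhoE) ∧ u ρ' = 0) := by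
  have h1 : 0 < η * M := mul_pos hη.1 hM
  have h2 : 0 < η' * M' := mul_pos hη'.1 hM'
  constructor
  · rintro ⟨hG, hG', hL, hL4⟩
    have hρc := (gop_zero_iff η M h1 ρ hρ.2.1).mp hG
    have hρ'c := (gop_zero_iff η' M' h2 ρ' hρ'.2.1).mp hG'
    rw [hG', smul_zero, add_zero] at hL4
    refine ⟨hρc, hρ'c, ?_⟩
    rcases hρ'c with rfl | rfl
    · exact (lop_g_iff _ _ _).mp hL4
    · exact (lop_e_iff _ _ _).mp hL4
  · rintro ⟨hρc, hρ'c, hu⟩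
    have hG : Gop η M ρ = 0 := by
      rcases hρc with rfl | rfl
      exacts [gop_g η M, gop_e η M]
    have hG' : Gop η' M' ρ' = 0 := by
      rcases hρ'c with rfl | rfl
      exacts [gop_g η' M', gop_e η' M']
    have hL' : Lop ω' (u ρ') M' ρ' = 0 := by
      rcases hρ'c with rfl | rfl
      exacts [(lop_g_iff _ _ _).mpr hu, (lop_e_iff _ _ _).mpr hu]
    refine ⟨hG, hG', ?_, ?_⟩
    · rcases hρc with rfl | rfl
      exacts [(lop_g_iff _ _ _).mpr hu, (lop_e_iff _ _ _).mpr hu]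
    · rw [hL', hG', smul_zero, add_zero]
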